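/- For every real r > 1 there exists a constant C_r > 0 such that for every τ ≥ 0 and all a, b, c : ℤ² → [0,∞]: ∑_{(j,k)∈ℤ²×ℤ²} ‖j‖ · a(j) · b(k) · ‖j+k‖^{r} e^{τ‖j+k‖} · c(j+k) ≤ C_r [ S_{r+1/2,τ}(a) · (b(0) + S_{r,τ}(b)) · S_{r+1/2,τ}(c) + S_{r+1/2,τ}(a) · S_{r+1/2,τ}(b) · S_{r,τ}(c) ]. (This is the Fourier-coefficient form of the divergence estimate |⟨A^r e^{τA}((∇·f)g), A^r e^{τA}h⟩| of Lemma A.3.) -/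

import Mathlib

/-!
Since `e^{τ‖k‖} ≥ 1`, the exponentials can be absorbed into `a`, `b`, `c`, which reduces the
estimate to `τ = 0`. The terms with `k = 0` give `b(0) S(a) S(c)` by Cauchy–Schwarz. For `k ≠ 0`
the kernel is split as
`‖j‖ ‖j+k‖^r ≤ 2^{r-1} (‖j‖^{r+1/2} (‖j+k‖^{1/2} + ‖k‖^{1/2}) + ‖j‖ ‖k‖^r)`,
and each of the three resulting pairings `∑ F(j) G(k) H(j+k)` is bounded by Young's inequality
`ℓ² × ℓ¹ × ℓ²`, with the `ℓ¹` norm on a factor living on `ℤ² \ {0}`. There the `ℓ¹` norm costs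
only `r` extra powers of `‖k‖` in `ℓ²`, by Cauchy–Schwarz against `∑_{k ≠ 0} ‖k‖^{-2r}`, which
is finite for `r > 1`.
-/

open scoped ENNReal

noncomputable section

/-- Euclidean norm of a lattice point `k ∈ ℤ²` viewed as a vector in `ℝ²`. -/
def nz (k : ℤ × ℤ) : ℝ := Real.sqrt ((k.1 : ℝ) ^ 2 + (k.2 : ℝ) ^ 2)

/-- The weighted ℓ²-norm `S_{ρ,τ}(a) = (∑_k ‖k‖^{2ρ} e^{2τ‖k‖} a(k)²)^{1/2}`. -/
def S (ρ τ : ℝ) (a : ℤ × ℤ → ℝ≥0∞) : ℝ≥0∞ :=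
  (∑' k : ℤ × ℤ, ENNReal.ofReal (nz k ^ (2 * ρ) * Real.exp (2 * τ * nz k)) * (a k) ^ 2)
    ^ ((1 : ℝ) / 2)

section L2

variable {ι : Type*}

def l2 (f : ι → ℝ≥0∞) : ℝ≥0∞ := (∑' i, f i ^ 2) ^ (1 / 2 : ℝ)

theorem l2_mono {f g : ι → ℝ≥0∞} (h : ∀ i, f i ≤ g i) : l2 f ≤ l2 g :=
  ENNReal.rpow_le_rpow (ENNReal.tsum_le_tsum fun i => pow_le_pow_left' (h i) 2) (by norm_num)

theorem l2_comp_equiv {κ : Type*} (e : κ ≃ ι) (f : ι → ℝ≥0∞) : l2 (fun i => f (e i)) = l2 f := by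
  rw [l2, l2, e.tsum_eq (fun i => f i ^ 2)]

theorem tsum_mul_le_l2_mul_l2 (f g : ι → ℝ≥0∞) : ∑' i, f i * g i ≤ l2 f * l2 g := by
  let _ : MeasurableSpace ι := ⊤
  have h := ENNReal.lintegral_mul_le_Lp_mul_Lq MeasureTheory.Measure.count
    Real.HolderConjugate.two_two (measurable_from_top (f := f)).aemeasurable
    (measurable_from_top (f := g)).aemeasurable
  simpa only [MeasureTheory.lintegral_count, Pi.mul_apply, ENNReal.rpow_two, l2] using h

end L2

section ConvPairing

variable {Γ : Type*} [AddGroup Γ]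

def convPairing (F G H : Γ → ℝ≥0∞) : ℝ≥0∞ := ∑' p : Γ × Γ, F p.1 * G p.2 * H (p.1 + p.2)

theorem convPairing_mono {F₁ F₂ G₁ G₂ H₁ H₂ : Γ → ℝ≥0∞} (hF : F₁ ≤ F₂) (hG : G₁ ≤ G₂)
    (hH : H₁ ≤ H₂) : convPairing F₁ G₁ H₁ ≤ convPairing F₂ G₂ H₂ :=
  ENNReal.tsum_le_tsum fun _ => mul_le_mul' (mul_le_mul' (hF _) (hG _)) (hH _)

theorem convPairing_add_middle (F G₁ G₂ H : Γ → ℝ≥0∞) :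
    convPairing F (G₁ + G₂) H = convPairing F G₁ H + convPairing F G₂ H := by
  simp only [convPairing, Pi.add_apply, mul_add, add_mul, ENNReal.tsum_add]

theorem convPairing_indicator_zero (F G H : Γ → ℝ≥0∞) :
    convPairing F (({0} : Set Γ).indicator G) H = G 0 * ∑' j, F j * H j := by
  rw [convPairing, ENNReal.tsum_prod', ← ENNReal.tsum_mul_left]
  refine tsum_congr fun j => (tsum_eq_single 0 fun k hk => ?_).trans ?_
  · simp [Set.indicator_of_notMem (Set.mem_singleton_iff.not.mpr hk)]
  · simp only [Set.indicator_of_mem (Set.mem_singleton (0 : Γ)), add_zero]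
    ring

theorem convPairing_le_tsum_middle_mul_l2_mul_l2 (F G H : Γ → ℝ≥0∞) :
    convPairing F G H ≤ (∑' k, G k) * (l2 F * l2 H) := by
  calc convPairing F G H = ∑' k, G k * ∑' j, F j * H (j + k) := by
        rw [convPairing, ENNReal.tsum_prod', ENNReal.tsum_comm]
        refine tsum_congr fun k => ?_
        rw [← ENNReal.tsum_mul_left]
        exact tsum_congr fun j => by ring
    _ ≤ ∑' k, G k * (l2 F * l2 H) := by
        refine ENNReal.tsum_le_tsum fun k => mul_le_mul_right ?_ _
        calc ∑' j, F j * H (j + k) ≤ l2 F * l2 (fun j => H (j + k)) := tsum_mul_le_l2_mul_l2 _ _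
          _ = l2 F * l2 H := congrArg _ (l2_comp_equiv (Equiv.addRight k) H)
    _ = (∑' k, G k) * (l2 F * l2 H) := ENNReal.tsum_mul_right

theorem convPairing_le_tsum_right_mul_l2_mul_l2 (F G H : Γ → ℝ≥0∞) :
    convPairing F G H ≤ (∑' l, H l) * (l2 F * l2 G) := by
  calc convPairing F G H = ∑' l, H l * ∑' j, F j * G (-j + l) := by
        rw [convPairing, ENNReal.tsum_prod']
        calc ∑' (j : Γ) (k : Γ), F j * G k * H (j + k)
            = ∑' (j : Γ) (l : Γ), F j * G (-j + l) * H l := by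
              refine tsum_congr fun j => ?_
              rw [← (Equiv.addLeft (-j)).tsum_eq]
              simp
          _ = ∑' l, H l * ∑' j, F j * G (-j + l) := by
              rw [ENNReal.tsum_comm]
              refine tsum_congr fun l => ?_
              rw [← ENNReal.tsum_mul_left]
              exact tsum_congr fun j => by ring
    _ ≤ ∑' l, H l * (l2 F * l2 G) := by
        refine ENNReal.tsum_le_tsum fun l => mul_le_mul_right ?_ _
        calc ∑' j, F j * G (-j + l) ≤ l2 F * l2 (fun j => G (-j + l)) :=
              tsum_mul_le_l2_mul_l2 _ _
          _ = l2 F * l2 G :=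
              congrArg _ (l2_comp_equiv ((Equiv.neg Γ).trans (Equiv.addRight l)) G)
    _ = (∑' l, H l) * (l2 F * l2 G) := ENNReal.tsum_mul_right

end ConvPairing

theorem ENNReal.mul_rpow_le_of_le_add {x y z : ℝ≥0∞} {r : ℝ} (hr : 1 ≤ r) (hz : z ≤ x + y)
    (hx : x ≤ z + y) :
    x * z ^ r ≤
      2 ^ (r - 1) * (x ^ (r + 1 / 2) * (z ^ (1 / 2 : ℝ) + y ^ (1 / 2 : ℝ)) + x * y ^ r) := by
  have hsplit : x * x ^ r = x ^ (r + 1 / 2) * x ^ (1 / 2 : ℝ) := by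
    rw [← ENNReal.rpow_add_of_nonneg _ _ (by linarith) (by norm_num), add_assoc,
      ENNReal.rpow_add_of_nonneg _ _ (by linarith) (by norm_num)]
    norm_num [mul_comm]
  calc x * z ^ r ≤ x * (2 ^ (r - 1) * (x ^ r + y ^ r)) :=
        mul_le_mul_right ((ENNReal.rpow_le_rpow hz (by linarith)).trans
          (ENNReal.rpow_add_le_mul_rpow_add_rpow x y hr)) x
    _ = 2 ^ (r - 1) * (x ^ (r + 1 / 2) * x ^ (1 / 2 : ℝ) + x * y ^ r) := by
        rw [← hsplit]; ring
    _ ≤ 2 ^ (r - 1) * (x ^ (r + 1 / 2) * (z ^ (1 / 2 : ℝ) + y ^ (1 / 2 : ℝ)) + x * y ^ r) := by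
        gcongr
        exact (ENNReal.rpow_le_rpow hx (by norm_num)).trans
          (ENNReal.rpow_add_le_add_rpow z y (by norm_num) (by norm_num))

theorem nz_eq_norm (k : ℤ × ℤ) : nz k = ‖(⟨k.1, k.2⟩ : ℂ)‖ := by
  rw [Complex.norm_def, Complex.normSq_mk, nz, sq, sq]

theorem nz_nonneg (k : ℤ × ℤ) : 0 ≤ nz k := Real.sqrt_nonneg _

@[simp] theorem nz_zero : nz 0 = 0 := by simp [nz]

theorem nz_add_le (j k : ℤ × ℤ) : nz (j + k) ≤ nz j + nz k := by
  have h : (⟨((j + k).1 : ℝ), ((j + k).2 : ℝ)⟩ : ℂ) = ⟨j.1, j.2⟩ + ⟨k.1, k.2⟩ := by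
    apply Complex.ext <;> simp
  simpa only [nz_eq_norm, h] using norm_add_le _ _

theorem nz_neg (k : ℤ × ℤ) : nz (-k) = nz k := by
  simp only [nz_eq_norm, ← norm_neg (⟨(k.1 : ℝ), (k.2 : ℝ)⟩ : ℂ)]
  congr 1
  apply Complex.ext <;> simp

theorem abs_fst_le_nz (k : ℤ × ℤ) : |(k.1 : ℝ)| ≤ nz k :=
  (nz_eq_norm k).symm ▸ Complex.abs_re_le_norm (⟨k.1, k.2⟩ : ℂ)

theorem abs_snd_le_nz (k : ℤ × ℤ) : |(k.2 : ℝ)| ≤ nz k :=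
  (nz_eq_norm k).symm ▸ Complex.abs_im_le_norm (⟨k.1, k.2⟩ : ℂ)

theorem one_le_nz {k : ℤ × ℤ} (hk : k ≠ 0) : 1 ≤ nz k := by
  obtain h | h : k.1 ≠ 0 ∨ k.2 ≠ 0 := by
    by_contra! h; exact hk (Prod.ext h.1 h.2)
  · exact (by exact_mod_cast Int.one_le_abs h : (1 : ℝ) ≤ |(k.1 : ℝ)|).trans (abs_fst_le_nz k)
  · exact (by exact_mod_cast Int.one_le_abs h : (1 : ℝ) ≤ |(k.2 : ℝ)|).trans (abs_snd_le_nz k)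

theorem summable_nz_rpow_neg {s : ℝ} (hs : 2 < s) : Summable fun k : ℤ × ℤ => nz k ^ (-s) := by
  have hsup := (finTwoArrowEquiv ℤ).symm.summable_iff.mpr
    (EisensteinSeries.summable_one_div_norm_rpow hs)
  refine hsup.of_nonneg_of_le (fun k => Real.rpow_nonneg (nz_nonneg k) _) fun k => ?_
  rcases eq_or_ne k 0 with rfl | hk
  · simp [Real.zero_rpow (by linarith : -s ≠ 0)]
    positivity
  refine Real.rpow_le_rpow_of_nonpos ?_ ?_ (by linarith)
  · simpa [norm_pos_iff, Prod.ext_iff] using hk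
  · simp only [finTwoArrowEquiv_symm_apply, pi_norm_le_iff_of_nonneg (nz_nonneg k),
      Fin.forall_fin_two, Matrix.cons_val_zero, Matrix.cons_val_one, Int.norm_eq_abs]
    exact ⟨abs_fst_le_nz k, abs_snd_le_nz k⟩

def enz (k : ℤ × ℤ) : ℝ≥0∞ := ENNReal.ofReal (nz k)

@[simp] theorem enz_zero : enz 0 = 0 := by simp [enz]

theorem enz_ne_top (k : ℤ × ℤ) : enz k ≠ ⊤ := ENNReal.ofReal_ne_top

theorem enz_add_le (j k : ℤ × ℤ) : enz (j + k) ≤ enz j + enz k := by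
  rw [enz, enz, enz, ← ENNReal.ofReal_add (nz_nonneg j) (nz_nonneg k)]
  exact ENNReal.ofReal_le_ofReal (nz_add_le j k)

theorem enz_le_add (j k : ℤ × ℤ) : enz j ≤ enz (j + k) + enz k := by
  simpa [enz, nz_neg] using enz_add_le (j + k) (-k)

theorem one_le_enz {k : ℤ × ℤ} (hk : k ≠ 0) : 1 ≤ enz k :=
  ENNReal.one_le_ofReal.mpr (one_le_nz hk)

theorem enz_rpow_le_rpow {ρ σ : ℝ} (hρ : 0 < ρ) (hρσ : ρ ≤ σ) (k : ℤ × ℤ) :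
    enz k ^ ρ ≤ enz k ^ σ := by
  rcases eq_or_ne k 0 with rfl | hk
  · simp [ENNReal.zero_rpow_of_pos hρ, ENNReal.zero_rpow_of_pos (hρ.trans_le hρσ)]
  · exact ENNReal.rpow_le_rpow_of_exponent_le (one_le_enz hk) hρσ

theorem enz_rpow_mul_eq_indicator {ρ : ℝ} (hρ : 0 < ρ) (f : ℤ × ℤ → ℝ≥0∞) (k : ℤ × ℤ) :
    enz k ^ ρ * f k = enz k ^ ρ * ({0}ᶜ : Set (ℤ × ℤ)).indicator f k := by
  rcases eq_or_ne k 0 with rfl | hk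
  · simp [ENNReal.zero_rpow_of_pos hρ]
  · rw [Set.indicator_of_mem hk]

theorem indicator_le_enz_rpow_mul {σ : ℝ} (hσ : 0 ≤ σ) (f : ℤ × ℤ → ℝ≥0∞) (k : ℤ × ℤ) :
    ({0}ᶜ : Set (ℤ × ℤ)).indicator f k ≤ enz k ^ σ * f k := by
  rcases eq_or_ne k 0 with rfl | hk
  · simp
  · rw [Set.indicator_of_mem hk]
    refine le_mul_of_one_le_left zero_le ?_
    simpa using ENNReal.rpow_le_rpow_of_exponent_le (one_le_enz hk) hσ

def weightedL2 (ρ : ℝ) (f : ℤ × ℤ → ℝ≥0∞) : ℝ≥0∞ := l2 fun k => enz k ^ ρ * f k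

theorem weightedL2_mono {ρ σ : ℝ} (hρ : 0 < ρ) (hρσ : ρ ≤ σ) {f g : ℤ × ℤ → ℝ≥0∞}
    (hfg : ∀ k, f k ≤ g k) : weightedL2 ρ f ≤ weightedL2 σ g :=
  l2_mono fun k => mul_le_mul' (enz_rpow_le_rpow hρ hρσ k) (hfg k)

def expWeight (τ : ℝ) (f : ℤ × ℤ → ℝ≥0∞) (k : ℤ × ℤ) : ℝ≥0∞ :=
  ENNReal.ofReal (Real.exp (τ * nz k)) * f k

theorem le_expWeight {τ : ℝ} (hτ : 0 ≤ τ) (f : ℤ × ℤ → ℝ≥0∞) (k : ℤ × ℤ) :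
    f k ≤ expWeight τ f k :=
  le_mul_of_one_le_left zero_le
    (ENNReal.one_le_ofReal.mpr (Real.one_le_exp (mul_nonneg hτ (nz_nonneg k))))

@[simp] theorem expWeight_apply_zero (τ : ℝ) (f : ℤ × ℤ → ℝ≥0∞) : expWeight τ f 0 = f 0 := by
  simp [expWeight]

theorem S_eq_weightedL2 {ρ : ℝ} (hρ : 0 ≤ ρ) (τ : ℝ) (f : ℤ × ℤ → ℝ≥0∞) :
    S ρ τ f = weightedL2 ρ (expWeight τ f) := by
  refine congrArg (· ^ (1 / 2 : ℝ)) (tsum_congr fun k => ?_)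
  have hexp : Real.exp (2 * τ * nz k) = Real.exp (τ * nz k) ^ 2 := by
    rw [← Real.exp_nat_mul]; ring_nf
  show _ = (enz k ^ ρ * (ENNReal.ofReal (Real.exp (τ * nz k)) * f k)) ^ 2
  rw [hexp, ENNReal.ofReal_mul (Real.rpow_nonneg (nz_nonneg k) _),
    ← ENNReal.ofReal_rpow_of_nonneg (nz_nonneg k) (by linarith),
    ENNReal.ofReal_pow (Real.exp_nonneg _),
    mul_comm 2 ρ, ENNReal.rpow_mul, ENNReal.rpow_two, enz]
  ring

/-- The real power `0 ^ (-r) = 0` drops the origin from the sum. -/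
def sqrtEpsteinZeta (r : ℝ) : ℝ≥0∞ := l2 fun k : ℤ × ℤ => ENNReal.ofReal (nz k ^ (-r))

theorem sqrtEpsteinZeta_ne_top {r : ℝ} (hr : 1 < r) : sqrtEpsteinZeta r ≠ ⊤ := by
  have hsq (k : ℤ × ℤ) : ENNReal.ofReal (nz k ^ (-r)) ^ 2 = ENNReal.ofReal (nz k ^ (-(2 * r))) := by
    rw [← ENNReal.ofReal_pow (Real.rpow_nonneg (nz_nonneg k) _),
      ← Real.rpow_mul_natCast (nz_nonneg k)]
    ring_nf
  simp only [sqrtEpsteinZeta, l2, hsq]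
  rw [← ENNReal.ofReal_tsum_of_nonneg (fun k => Real.rpow_nonneg (nz_nonneg k) _)
    (summable_nz_rpow_neg (by linarith))]
  exact ENNReal.rpow_ne_top_of_nonneg (by norm_num) ENNReal.ofReal_ne_top

theorem tsum_enz_rpow_mul_le {r : ℝ} (σ : ℝ) {f : ℤ × ℤ → ℝ≥0∞} (hf : f 0 = 0) :
    ∑' k, enz k ^ σ * f k ≤ sqrtEpsteinZeta r * weightedL2 (σ + r) f := by
  have hsplit (k : ℤ × ℤ) :
      enz k ^ σ * f k = ENNReal.ofReal (nz k ^ (-r)) * (enz k ^ (σ + r) * f k) := by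
    rcases eq_or_ne k 0 with rfl | hk
    · simp [hf]
    have hnz : enz k ≠ 0 := (zero_lt_one.trans_le (one_le_enz hk)).ne'
    rw [← ENNReal.ofReal_rpow_of_pos (zero_lt_one.trans_le (one_le_nz hk)), ← mul_assoc, ← enz,
      ← ENNReal.rpow_add _ _ hnz (enz_ne_top k)]
    ring_nf
  simpa only [hsplit, sqrtEpsteinZeta, weightedL2] using tsum_mul_le_l2_mul_l2 _ _

theorem convPairing_enz_le {r : ℝ} (hr : 1 ≤ r) (a b c : ℤ × ℤ → ℝ≥0∞) :
    convPairing (fun j => enz j * a j) b (fun l => enz l ^ r * c l) ≤ 2 ^ (r - 1) *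
      (convPairing (fun j => enz j ^ (r + 1 / 2) * a j) b (fun l => enz l ^ (1 / 2 : ℝ) * c l)
        + convPairing (fun j => enz j ^ (r + 1 / 2) * a j) (fun k => enz k ^ (1 / 2 : ℝ) * b k) c
        + convPairing (fun j => enz j * a j) (fun k => enz k ^ r * b k) c) := by
  simp only [convPairing, ← ENNReal.tsum_add, ← ENNReal.tsum_mul_left]
  refine ENNReal.tsum_le_tsum fun ⟨j, k⟩ => ?_
  have hkernel := ENNReal.mul_rpow_le_of_le_add hr (enz_add_le j k) (enz_le_add j k)
  calc enz j * a j * b k * (enz (j + k) ^ r * c (j + k))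
      = enz j * enz (j + k) ^ r * (a j * b k * c (j + k)) := by ring
    _ ≤ _ * (a j * b k * c (j + k)) := mul_le_mul_left hkernel _
    _ = _ := by ring

theorem convPairing_indicator_zero_le {r : ℝ} (hr : 0 ≤ r) (a b c : ℤ × ℤ → ℝ≥0∞) :
    convPairing (fun j => enz j * a j) (({0} : Set (ℤ × ℤ)).indicator b)
        (fun l => enz l ^ r * c l) ≤
      b 0 * (weightedL2 (r + 1 / 2) a * weightedL2 (r + 1 / 2) c) := by
  rw [convPairing_indicator_zero]
  refine mul_le_mul_right ((ENNReal.tsum_le_tsum fun j => ?_).trans (tsum_mul_le_l2_mul_l2 _ _)) _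
  calc enz j * a j * (enz j ^ r * c j) = enz j ^ (1 + r) * (a j * c j) := by
        rw [ENNReal.rpow_add_of_nonneg _ _ zero_le_one hr, ENNReal.rpow_one]; ring
    _ ≤ enz j ^ ((r + 1 / 2) + (r + 1 / 2)) * (a j * c j) :=
        mul_le_mul_left (enz_rpow_le_rpow (by positivity) (by linarith) j) _
    _ = enz j ^ (r + 1 / 2) * a j * (enz j ^ (r + 1 / 2) * c j) := by
        rw [ENNReal.rpow_add_of_nonneg _ _ (by positivity) (by positivity)]; ring

theorem convPairing_indicator_compl_le {r : ℝ} (hr : 1 < r) (a b c : ℤ × ℤ → ℝ≥0∞) :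
    convPairing (fun j => enz j * a j) (({0}ᶜ : Set (ℤ × ℤ)).indicator b)
        (fun l => enz l ^ r * c l) ≤
      2 ^ (r - 1) * (3 * sqrtEpsteinZeta r *
        (weightedL2 (r + 1 / 2) a * weightedL2 (r + 1 / 2) b * weightedL2 r c)) := by
  set b' := ({0}ᶜ : Set (ℤ × ℤ)).indicator b
  set c' := ({0}ᶜ : Set (ℤ × ℤ)).indicator c
  set K := sqrtEpsteinZeta r
  set A := weightedL2 (r + 1 / 2) a
  set B := weightedL2 (r + 1 / 2) b
  set C := weightedL2 r c
  have hb' : ∀ k, b' k ≤ b k := Set.indicator_le_self _ _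
  have hc' : ∀ l, c' l ≤ c l := Set.indicator_le_self _ _
  have hb'B : weightedL2 r b' ≤ B := weightedL2_mono (by linarith) (by linarith) hb'
  have hc'C : l2 c' ≤ C := l2_mono (indicator_le_enz_rpow_mul (by linarith) c)
  have h₁ : convPairing (fun j => enz j ^ (r + 1 / 2) * a j) b'
      (fun l => enz l ^ (1 / 2 : ℝ) * c' l) ≤ K * (A * B * C) := by
    have hb'₁ : ∑' k, b' k ≤ K * B := by
      have h := tsum_enz_rpow_mul_le (r := r) 0 (f := b') (by simp [b'])
      simp only [ENNReal.rpow_zero, one_mul, zero_add] at h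
      exact h.trans (mul_le_mul_right hb'B K)
    have hc'₂ : weightedL2 (1 / 2) c' ≤ C := weightedL2_mono (by norm_num) (by linarith) hc'
    calc _ ≤ (∑' k, b' k) * (A * weightedL2 (1 / 2) c') :=
          convPairing_le_tsum_middle_mul_l2_mul_l2 _ _ _
      _ ≤ (K * B) * (A * C) := by gcongr
      _ = K * (A * B * C) := by ring
  have h₂ : convPairing (fun j => enz j ^ (r + 1 / 2) * a j) (fun k => enz k ^ (1 / 2 : ℝ) * b' k)
      c' ≤ K * (A * B * C) := by
    have hb'₁ : ∑' k, enz k ^ (1 / 2 : ℝ) * b' k ≤ K * B :=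
      (tsum_enz_rpow_mul_le (1 / 2) (by simp [b'])).trans
        (mul_le_mul_right (weightedL2_mono (by linarith) (by linarith) hb') K)
    calc _ ≤ (∑' k, enz k ^ (1 / 2 : ℝ) * b' k) * (A * l2 c') :=
          convPairing_le_tsum_middle_mul_l2_mul_l2 _ _ _
      _ ≤ (K * B) * (A * C) := by gcongr
      _ = K * (A * B * C) := by ring
  have h₃ : convPairing (fun j => enz j * a j) (fun k => enz k ^ r * b' k) c' ≤
      K * (A * B * C) := by
    have hc'₁ : ∑' l, c' l ≤ K * C := by
      have h := tsum_enz_rpow_mul_le (r := r) 0 (f := c') (by simp [c'])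
      simp only [ENNReal.rpow_zero, one_mul, zero_add] at h
      exact h.trans (mul_le_mul_right (weightedL2_mono (by linarith) le_rfl hc') K)
    have haA : l2 (fun j => enz j * a j) ≤ A := by
      have h : l2 (fun j => enz j * a j) = weightedL2 1 a := by simp [weightedL2]
      exact h ▸ weightedL2_mono one_pos (by linarith) fun _ => le_rfl
    calc _ ≤ (∑' l, c' l) * (l2 (fun j => enz j * a j) * weightedL2 r b') :=
          convPairing_le_tsum_right_mul_l2_mul_l2 _ _ _
      _ ≤ (K * C) * (A * B) := by gcongr
      _ = K * (A * B * C) := by ring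
  calc _ = convPairing (fun j => enz j * a j) b' (fun l => enz l ^ r * c' l) := by
        simp only [c', ← enz_rpow_mul_eq_indicator (by linarith : 0 < r)]
    _ ≤ _ := convPairing_enz_le hr.le a b' c'
    _ ≤ 2 ^ (r - 1) * (K * (A * B * C) + K * (A * B * C) + K * (A * B * C)) := by gcongr
    _ = _ := by ring

theorem convPairing_enz_le_weightedL2 {r : ℝ} (hr : 1 < r) (a b c : ℤ × ℤ → ℝ≥0∞) :
    convPairing (fun j => enz j * a j) b (fun l => enz l ^ r * c l) ≤
      (1 + 3 * 2 ^ (r - 1) * sqrtEpsteinZeta r) *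
        (weightedL2 (r + 1 / 2) a * (b 0 + weightedL2 r b) * weightedL2 (r + 1 / 2) c
          + weightedL2 (r + 1 / 2) a * weightedL2 (r + 1 / 2) b * weightedL2 r c) := by
  have hdiag : b 0 * (weightedL2 (r + 1 / 2) a * weightedL2 (r + 1 / 2) c) ≤
      weightedL2 (r + 1 / 2) a * (b 0 + weightedL2 r b) * weightedL2 (r + 1 / 2) c :=
    calc _ = weightedL2 (r + 1 / 2) a * b 0 * weightedL2 (r + 1 / 2) c := by ring
      _ ≤ _ := by gcongr; exact le_self_add
  set m := 3 * 2 ^ (r - 1) * sqrtEpsteinZeta r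
  set X := weightedL2 (r + 1 / 2) a * (b 0 + weightedL2 r b) * weightedL2 (r + 1 / 2) c
  set Y := weightedL2 (r + 1 / 2) a * weightedL2 (r + 1 / 2) b * weightedL2 r c
  calc _ = convPairing (fun j => enz j * a j) (({0} : Set (ℤ × ℤ)).indicator b)
          (fun l => enz l ^ r * c l) + convPairing (fun j => enz j * a j)
          (({0}ᶜ : Set (ℤ × ℤ)).indicator b) (fun l => enz l ^ r * c l) := by
        rw [← convPairing_add_middle, Set.indicator_self_add_compl]
    _ ≤ X + m * Y := add_le_add ((convPairing_indicator_zero_le (by linarith) a b c).trans hdiag)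
        ((convPairing_indicator_compl_le hr a b c).trans_eq (by ring))
    _ ≤ (X + Y) + (m * X + m * Y) := add_le_add le_self_add le_add_self
    _ = (1 + m) * (X + Y) := by ring

/-- Fourier-coefficient form of the divergence estimate
`|⟨A^r e^{τA}((∇·f)g), A^r e^{τA}h⟩|` of Lemma A.3. -/
theorem divergence_estimate :
    ∀ r : ℝ, 1 < r → ∃ C : ℝ, 0 < C ∧ ∀ τ : ℝ, 0 ≤ τ → ∀ a b c : ℤ × ℤ → ℝ≥0∞,
      (∑' p : (ℤ × ℤ) × (ℤ × ℤ),
          ENNReal.ofReal (nz p.1) * a p.1 * b p.2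
            * ENNReal.ofReal (nz (p.1 + p.2) ^ r * Real.exp (τ * nz (p.1 + p.2)))
            * c (p.1 + p.2))
        ≤ ENNReal.ofReal C *
            (S (r + 1 / 2) τ a * (b 0 + S r τ b) * S (r + 1 / 2) τ c
              + S (r + 1 / 2) τ a * S (r + 1 / 2) τ b * S r τ c) := by
  intro r hr
  set M := 1 + 3 * 2 ^ (r - 1) * sqrtEpsteinZeta r
  have hM : M ≠ ⊤ := by
    simp [M, ENNReal.mul_eq_top, sqrtEpsteinZeta_ne_top hr, ENNReal.rpow_eq_top_iff]
  refine ⟨M.toReal, ENNReal.toReal_pos (by simp [M]) hM, fun τ hτ a b c => ?_⟩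
  simp only [S_eq_weightedL2 (by linarith : (0 : ℝ) ≤ r),
    S_eq_weightedL2 (by linarith : (0 : ℝ) ≤ r + 1 / 2), ENNReal.ofReal_toReal hM,
    ← expWeight_apply_zero τ b]
  calc _ = convPairing (fun j => enz j * a j) b (fun l => enz l ^ r * expWeight τ c l) := by
        refine tsum_congr fun p => ?_
        rw [ENNReal.ofReal_mul (Real.rpow_nonneg (nz_nonneg _) _),
          ← ENNReal.ofReal_rpow_of_nonneg (nz_nonneg _) (by linarith)]
        simp only [expWeight, enz]
        ring
    _ ≤ convPairing (fun j => enz j * expWeight τ a j) (expWeight τ b)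
          (fun l => enz l ^ r * expWeight τ c l) :=
        convPairing_mono (fun j => mul_le_mul_right (le_expWeight hτ a j) _)
          (le_expWeight hτ b) le_rfl
    _ ≤ _ := convPairing_enz_le_weightedL2 hr _ _ _

end
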